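/- Let k be a field and for each i ∈ {0,...,f-1} let M_i be a finite-dimensional filtered k-vector space with a decreasing filtration Fil^0 M_i ⊇ Fil^1 M_i ⊇ Fil^2 M_i ⊇ Fil^3 M_i = 0. For k = (k_1,...,k_f) ∈ {0,1,2}^f set Fil^k M := ⊗_i Fil^{k_i} M_i ⊆ M := ⊗_i M_i. Then for any k, k' ∈ {0,1,2}^f, Fil^k M ∩ Fil^{k'} M = Fil^{k''} M where k''_i = max(k_i, k'_i). -/

import Mathlib

/-!
Over a field, any subspace `p` of `V` is carried into itself by some projection of `V` onto a
given subspace `q`: split `p = (p ⊓ q) ⊕ c` and project onto `q` along a complement containing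
`c`. Tensoring these projections gives an endomorphism of `⨂ᵢ Vᵢ` that fixes `⨂ᵢ qᵢ` and maps
`⨂ᵢ pᵢ` into `⨂ᵢ (pᵢ ⊓ qᵢ)`, so `⨂ᵢ pᵢ ∩ ⨂ᵢ qᵢ = ⨂ᵢ (pᵢ ⊓ qᵢ)` for arbitrary subspaces. For a
decreasing filtration, `Fil^{max(k, k')} = Fil^k ⊓ Fil^{k'}` in each factor.
-/

open scoped TensorProduct

namespace TensorFil10

variable {𝕜 : Type*} [Field 𝕜] {f : ℕ}
variable (𝕜) (M : Fin f → Type*) [∀ i, AddCommGroup (M i)] [∀ i, Module 𝕜 (M i)]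

/-- `Fil^k M = ⊗_i Fil^{k_i} M_i ⊆ M = ⊗_i M_i`, the image of the tensor product of the
filtration steps under the canonical (injective, as we are over a field) map. -/
noncomputable def filT (F : ∀ i, ℕ → Submodule 𝕜 (M i)) (k : Fin f → ℕ) :
    Submodule 𝕜 (⨂[𝕜] i, M i) :=
  LinearMap.range (PiTensorProduct.map fun i => (F i (k i)).subtype)

end TensorFil10

namespace Submodule

variable {K V : Type*} [Field K] [AddCommGroup V] [Module K V]

theorem exists_isCompl_mapsTo_projection (p q : Submodule K V) :
    ∃ (r : Submodule K V) (h : IsCompl q r), Set.MapsTo (q.projection r h) p p := by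
  obtain ⟨c, hc⟩ := (p ⊓ q).exists_isCompl
  have hqc : Disjoint q (p ⊓ c) := by
    rw [disjoint_iff, ← hc.inf_eq_bot]
    ac_rfl
  obtain ⟨d, hd⟩ := (q ⊔ p ⊓ c).exists_isCompl
  have hr : IsCompl q (p ⊓ c ⊔ d) := hqc.isCompl_sup_right_of_isCompl_sup_left hd
  refine ⟨_, hr, fun x hx => ?_⟩
  obtain ⟨a, ha, b, hb, rfl⟩ := mem_sup.1 (hc.codisjoint.eq_top ▸ mem_top : x ∈ p ⊓ q ⊔ c)
  have hbp : b ∈ p := by simpa using p.sub_mem hx ha.1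
  rw [map_add, projection_apply_of_mem_left hr ha.2,
    projection_apply_of_mem_right hr (mem_sup_left ⟨hbp, hb⟩), add_zero]
  exact ha.1

end Submodule

namespace PiTensorProduct

section CommSemiring

variable {R ι : Type*} [CommSemiring R] {M N : ι → Type*}
  [∀ i, AddCommMonoid (M i)] [∀ i, Module R (M i)]
  [∀ i, AddCommMonoid (N i)] [∀ i, Module R (N i)]

theorem range_mapIncl_mono {p q : ∀ i, Submodule R (M i)} (h : p ≤ q) :
    LinearMap.range (mapIncl p) ≤ LinearMap.range (mapIncl q) := by
  have hfac : mapIncl p = mapIncl q ∘ₗ map fun i => Submodule.inclusion (h i) := by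
    rw [mapIncl, mapIncl, ← map_comp]
    rfl
  rw [hfac]
  exact LinearMap.range_comp_le_range _ _

theorem map_eq_self_of_mem_range_mapIncl {φ : ∀ i, M i →ₗ[R] M i} {q : ∀ i, Submodule R (M i)}
    (hφ : ∀ i, ∀ x ∈ q i, φ i x = x) {x : ⨂[R] i, M i} (hx : x ∈ LinearMap.range (mapIncl q)) :
    map φ x = x := by
  obtain ⟨y, rfl⟩ := hx
  have hfix : (fun i => φ i ∘ₗ (q i).subtype) = fun i => (q i).subtype := by
    funext i
    ext v
    exact hφ i v v.2
  rw [mapIncl, ← LinearMap.comp_apply, ← map_comp, hfix]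

theorem map_mem_range_mapIncl {φ : ∀ i, M i →ₗ[R] N i} {p : ∀ i, Submodule R (M i)}
    {q : ∀ i, Submodule R (N i)} (hφ : ∀ i, ∀ x ∈ p i, φ i x ∈ q i) {x : ⨂[R] i, M i}
    (hx : x ∈ LinearMap.range (mapIncl p)) : map φ x ∈ LinearMap.range (mapIncl q) := by
  obtain ⟨y, rfl⟩ := hx
  refine ⟨map (fun i => (φ i).restrict (hφ i)) y, ?_⟩
  rw [mapIncl, mapIncl, ← LinearMap.comp_apply, ← map_comp, ← LinearMap.comp_apply, ← map_comp]
  rfl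

end CommSemiring

section Field

variable {K ι : Type*} [Field K] {V : ι → Type*} [∀ i, AddCommGroup (V i)] [∀ i, Module K (V i)]

theorem range_mapIncl_inf (p q : ∀ i, Submodule K (V i)) :
    LinearMap.range (mapIncl p) ⊓ LinearMap.range (mapIncl q) =
      LinearMap.range (mapIncl (p ⊓ q)) := by
  refine le_antisymm (fun x ⟨hxp, hxq⟩ => ?_)
    (le_inf (range_mapIncl_mono inf_le_left) (range_mapIncl_mono inf_le_right))
  choose r hr hmaps using fun i => (p i).exists_isCompl_mapsTo_projection (q i)
  have hfix : map (fun i => (q i).projection (r i) (hr i)) x = x :=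
    map_eq_self_of_mem_range_mapIncl
      (fun i _ hv => Submodule.projection_apply_of_mem_left (hr i) hv) hxq
  rw [← hfix]
  exact map_mem_range_mapIncl (q := p ⊓ q)
    (fun i v hv => Submodule.mem_inf.2 ⟨hmaps i hv, Submodule.projection_apply_mem (hr i) v⟩) hxp

end Field

end PiTensorProduct

namespace TensorFil10

variable {𝕜 : Type*} [Field 𝕜] {f : ℕ}
variable (𝕜) (M : Fin f → Type*) [∀ i, AddCommGroup (M i)] [∀ i, Module 𝕜 (M i)]

theorem filT_inf_filT (F : ∀ i, ℕ → Submodule 𝕜 (M i))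
    (hF : ∀ i, Antitone (F i))
    (k k' : Fin f → ℕ) :
    filT 𝕜 M F k ⊓ filT 𝕜 M F k' = filT 𝕜 M F fun i => max (k i) (k' i) := by
  have hmax : (fun i => F i (k i)) ⊓ (fun i => F i (k' i)) = fun i => F i (max (k i) (k' i)) :=
    funext fun i => ((hF i).map_sup (k i) (k' i)).symm
  exact (PiTensorProduct.range_mapIncl_inf _ _).trans
    (congrArg (fun p => LinearMap.range (PiTensorProduct.mapIncl p)) hmax)

end TensorFil10
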